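/- For every integer k ≥ 5 and every prime D ≥ 11, one has Ψ_k^2(D) < 0.25. -/

import Mathlib

/-! For `ν ≥ 4` and `0 ≤ x ≤ 2` the integral representation gives `|J_ν(x)| ≤ (x/2)^4/24`:
bound `sin^(2ν)` by `sin^8`, whose integral over `[0, π/2]` is `35π/256`, and `Γ(ν + 1/2)` by
`Γ(9/2) = 105√π/16`. Together with `σ₀(D^e m) ≤ (e + 1) m` and `√D ≥ 3`, the `m`-th term of
`Ψ_k^2(D)` is at most `2π⁴/(D⁴m²)`, so `Ψ_k^2(D) ≤ 2π · 2π⁴/D⁴ · ζ(2) = 2π⁷/(3D⁴)`,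
which is below `1/4` as soon as `D ≥ 11`. -/

/-- The J-Bessel function `J_ν(x)`, defined for real `ν ≥ 0` and `x > 0` by
`J_ν(x) = (2(x/2)^ν / (Γ(ν+1/2)Γ(1/2))) ∫_0^{π/2} sin(θ)^{2ν} cos(x cos θ) dθ`. -/
noncomputable def besselJ (ν x : ℝ) : ℝ :=
  2 * (x / 2) ^ ν / (Real.Gamma (ν + 1 / 2) * Real.Gamma (1 / 2)) *
    ∫ θ in (0 : ℝ)..(Real.pi / 2), Real.sin θ ^ (2 * ν) * Real.cos (x * Real.cos θ)

/-- The Kloosterman sum `S(m, n; c) = Σ_{x ∈ (ℤ/cℤ)ˣ} e((mx + n x̄)/c)`. -/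
noncomputable def klSum (m n : ℤ) (c : ℕ) : ℂ :=
  ∑ x ∈ Finset.filter (fun x => Nat.Coprime x c) (Finset.range c),
    Complex.exp (2 * Real.pi * Complex.I *
      ((m : ℂ) * (x : ℂ) + (n : ℂ) * ((((x : ZMod c)⁻¹ : ZMod c).val : ℕ) : ℂ)) / (c : ℂ))

/-- The twisted Kloosterman sum `S_χ(m, n; c) = Σ_{x ∈ (ℤ/cℤ)ˣ} χ(x mod D) e((mx + n x̄)/c)`
for a Dirichlet character `χ` mod `D`. -/
noncomputable def klSumT {D : ℕ} (χ : DirichletCharacter ℂ D) (m n : ℤ) (c : ℕ) : ℂ :=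
  ∑ x ∈ Finset.filter (fun x => Nat.Coprime x c) (Finset.range c),
    χ ((x : ℕ) : ZMod D) * Complex.exp (2 * Real.pi * Complex.I *
      ((m : ℂ) * (x : ℂ) + (n : ℂ) * ((((x : ZMod c)⁻¹ : ZMod c).val : ℕ) : ℂ)) / (c : ℂ))

/-- The quadratic Dirichlet character mod a prime `D` (the Legendre symbol `(·/D)`),
with values in `ℂ`. -/
noncomputable def omegaChar (D : ℕ) (hD : D.Prime) : DirichletCharacter ℂ D :=
  letI : Fact D.Prime := ⟨hD⟩
  (quadraticChar (ZMod D)).ringHomComp (Int.castRingHom ℂ)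

/-- `φ_k(m,n) = δ_{m,n} + 2π i^k Σ_{c > 0, D ∣ c} c⁻¹ S_ω(m,n;c) J_{k-1}(4π√(mn)/c)`. -/
noncomputable def phiK (D : ℕ) (χ : DirichletCharacter ℂ D) (k m n : ℕ) : ℂ :=
  (if m = n then 1 else 0) +
    2 * Real.pi * Complex.I ^ k *
      ∑' c : {c : ℕ // 0 < c ∧ D ∣ c},
        ((c : ℕ) : ℂ)⁻¹ * klSumT χ m n c *
          ((besselJ ((k : ℝ) - 1) (4 * Real.pi * Real.sqrt ((m : ℝ) * n) / ((c : ℕ) : ℝ)) : ℝ) : ℂ)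

/-- `Ψ_k^1(D) = 2π D^{-1/2} Σ_{ℓ ≥ 1, D ∤ ℓ} ℓ^{-1/2} σ₀(ℓ) |J_{k-1}(4π/ℓ)|`. -/
noncomputable def Psi1 (k D : ℕ) : ℝ :=
  2 * Real.pi * (D : ℝ) ^ (-(1 / 2) : ℝ) *
    ∑' ℓ : {ℓ : ℕ // 0 < ℓ ∧ ¬ D ∣ ℓ},
      ((ℓ : ℕ) : ℝ) ^ (-(1 / 2) : ℝ) * ((ℓ : ℕ).divisors.card : ℝ) *
        |besselJ ((k : ℝ) - 1) (4 * Real.pi / ((ℓ : ℕ) : ℝ))|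

/-- `Ψ_k^2(D) = 2π Σ_{m ≥ 1} (Dm)^{-1/2} (√D σ₀(Dm) + σ₀(D²m)) |J_{k-1}(4π/(Dm))|`. -/
noncomputable def Psi2 (k D : ℕ) : ℝ :=
  2 * Real.pi *
    ∑' m : ℕ+,
      ((D : ℝ) * (m : ℕ)) ^ (-(1 / 2) : ℝ) *
        (Real.sqrt D * (((D * (m : ℕ)).divisors.card : ℝ)) + ((D ^ 2 * (m : ℕ)).divisors.card : ℝ)) *
        |besselJ ((k : ℝ) - 1) (4 * Real.pi / ((D : ℝ) * (m : ℕ)))|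

/-- The Riemann zeta function at a real argument. -/
noncomputable def zetaR (s : ℝ) : ℝ := (riemannZeta (s : ℂ)).re

open Real Finset
open scoped Pointwise

lemma integral_sin_pow_add_two_zero_pi_div_two (n : ℕ) :
    ∫ θ in (0 : ℝ)..π / 2, sin θ ^ (n + 2) =
      (n + 1) / (n + 2) * ∫ θ in (0 : ℝ)..π / 2, sin θ ^ n := by
  simp [integral_sin_pow]

lemma integral_sin_pow_eight_zero_pi_div_two :
    ∫ θ in (0 : ℝ)..π / 2, sin θ ^ 8 = 35 * π / 256 := by
  simp only [integral_sin_pow_add_two_zero_pi_div_two 6, integral_sin_pow_add_two_zero_pi_div_two 4,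
    integral_sin_pow_add_two_zero_pi_div_two 2, integral_sin_pow_add_two_zero_pi_div_two 0,
    pow_zero, intervalIntegral.integral_const, smul_eq_mul]
  norm_num
  ring

lemma Real.Gamma_nine_halves : Gamma (9 / 2) = 105 / 16 * √π := by
  have step (s : ℝ) (hs : 0 < s) (c : ℝ) (h : Gamma s = c * √π) :
      Gamma (s + 1) = s * c * √π := by
    rw [Gamma_add_one hs.ne', h, mul_assoc]
  have h32 := step (1 / 2) (by norm_num) 1 (by rw [Gamma_one_half_eq, one_mul])
  have h52 := step (1 / 2 + 1) (by norm_num) _ h32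
  have h72 := step (1 / 2 + 1 + 1) (by norm_num) _ h52
  have h92 := step (1 / 2 + 1 + 1 + 1) (by norm_num) _ h72
  norm_num at h92
  exact h92

lemma Real.Gamma_nine_halves_le_Gamma {s : ℝ} (hs : 9 / 2 ≤ s) : Gamma (9 / 2) ≤ Gamma s :=
  Gamma_strictMonoOn_Ici.monotoneOn (by norm_num [Set.mem_Ici]) (Set.mem_Ici.2 (by linarith)) hs

lemma abs_integral_sin_rpow_mul_cos_le {ν : ℝ} (hν : 4 ≤ ν) (x : ℝ) :
    |∫ θ in (0 : ℝ)..π / 2, sin θ ^ (2 * ν) * cos (x * cos θ)| ≤ 35 * π / 256 := by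
  rw [← integral_sin_pow_eight_zero_pi_div_two, ← Real.norm_eq_abs]
  refine intervalIntegral.norm_integral_le_of_norm_le (by positivity)
    (Filter.Eventually.of_forall fun θ hθ => ?_) ((continuous_sin.pow 8).intervalIntegrable _ _)
  have hsin0 : 0 ≤ sin θ := sin_nonneg_of_nonneg_of_le_pi hθ.1.le (by linarith [hθ.2, pi_pos])
  calc ‖sin θ ^ (2 * ν) * cos (x * cos θ)‖ ≤ sin θ ^ (2 * ν) * 1 := by
        rw [norm_mul, norm_of_nonneg (rpow_nonneg hsin0 _)]
        gcongr
        exact abs_cos_le_one _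
    _ ≤ sin θ ^ ((8 : ℕ) : ℝ) := by
        rw [mul_one]
        exact rpow_le_rpow_of_exponent_ge' hsin0 (sin_le_one θ) (by norm_num)
          (by push_cast; linarith)
    _ = sin θ ^ 8 := rpow_natCast _ 8

lemma abs_besselJ_le {ν x : ℝ} (hν : 4 ≤ ν) (hx0 : 0 ≤ x) (hx2 : x ≤ 2) :
    |besselJ ν x| ≤ (x / 2) ^ 4 / 24 := by
  have hpow : (x / 2) ^ ν ≤ (x / 2) ^ ((4 : ℕ) : ℝ) :=
    rpow_le_rpow_of_exponent_ge' (by positivity) (by linarith) (by norm_num)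
      (by push_cast; linarith)
  rw [rpow_natCast] at hpow
  have hΓ := Gamma_nine_halves_le_Gamma (s := ν + 1 / 2) (by linarith)
  rw [Gamma_nine_halves] at hΓ
  have hsqrt : √π * √π = π := mul_self_sqrt pi_pos.le
  rw [besselJ, abs_mul, Gamma_one_half_eq, abs_of_nonneg (by positivity)]
  calc 2 * (x / 2) ^ ν / (Gamma (ν + 1 / 2) * √π) *
        |∫ θ in (0 : ℝ)..π / 2, sin θ ^ (2 * ν) * cos (x * cos θ)|
      ≤ 2 * (x / 2) ^ 4 / (105 / 16 * √π * √π) * (35 * π / 256) := by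
        gcongr
        exact abs_integral_sin_rpow_mul_cos_le hν x
    _ = (x / 2) ^ 4 / 24 := by
        rw [mul_assoc _ √π, hsqrt]
        field_simp
        ring

lemma Nat.card_divisors_prime_pow_mul_le {p : ℕ} (hp : p.Prime) (e n : ℕ) :
    #(p ^ e * n).divisors ≤ (e + 1) * n := by
  rw [Nat.divisors_mul]
  calc #((p ^ e).divisors * n.divisors) ≤ #(p ^ e).divisors * #n.divisors := card_mul_le
    _ ≤ (e + 1) * n := by
      rw [← ArithmeticFunction.sigma_zero_apply, ArithmeticFunction.sigma_zero_apply_prime_pow hp]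
      gcongr
      exact Nat.card_divisors_le_self n

noncomputable def psi2Summand (ν : ℝ) (D : ℕ) (m : ℕ+) : ℝ :=
  ((D : ℝ) * (m : ℕ)) ^ (-(1 / 2) : ℝ) *
    (√D * ((D * (m : ℕ)).divisors.card : ℝ) + ((D ^ 2 * (m : ℕ)).divisors.card : ℝ)) *
    |besselJ ν (4 * π / ((D : ℝ) * (m : ℕ)))|

lemma Psi2_eq_tsum_psi2Summand (k D : ℕ) :
    Psi2 k D = 2 * π * ∑' m, psi2Summand ((k : ℝ) - 1) D m := rfl

lemma psi2Summand_nonneg (ν : ℝ) (D : ℕ) (m : ℕ+) : 0 ≤ psi2Summand ν D m := by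
  unfold psi2Summand
  positivity

lemma psi2Summand_le {ν : ℝ} (hν : 4 ≤ ν) {D : ℕ} (hD : D.Prime) (hD9 : 9 ≤ D) (m : ℕ+) :
    psi2Summand ν D m ≤ 2 * π ^ 4 / D ^ 4 * (1 / ((m : ℕ) : ℝ) ^ 2) := by
  obtain ⟨n, hn⟩ := m
  simp only [psi2Summand, PNat.mk_coe]
  have hn1 : (1 : ℝ) ≤ n := Nat.one_le_cast.2 hn
  have hsqrt_n : √(n : ℝ) ≤ n := sqrt_le_iff.2 ⟨by linarith, by nlinarith⟩
  have hD9_real : (9 : ℝ) ≤ D := by exact_mod_cast hD9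
  have hsqrt_D : 3 ≤ √(D : ℝ) := le_sqrt_of_sq_le (by linarith)
  have hdivisors : √D * ((D * n).divisors.card : ℝ) + ((D ^ 2 * n).divisors.card : ℝ)
      ≤ 3 * √D * n := by
    have h1 : (D * n).divisors.card ≤ 2 * n := by
      simpa using Nat.card_divisors_prime_pow_mul_le hD 1 n
    have h2 : (D ^ 2 * n).divisors.card ≤ 3 * n := Nat.card_divisors_prime_pow_mul_le hD 2 n
    have h1' : ((D * n).divisors.card : ℝ) ≤ 2 * n := by exact_mod_cast h1
    have h2' : ((D ^ 2 * n).divisors.card : ℝ) ≤ 3 * n := by exact_mod_cast h2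
    nlinarith
  have hbessel : |besselJ ν (4 * π / (D * n))| ≤ (4 * π / (D * n) / 2) ^ 4 / 24 :=
    abs_besselJ_le hν (by positivity) (by rw [div_le_iff₀ (by positivity)]; nlinarith [pi_lt_d2])
  calc ((D : ℝ) * n) ^ (-(1 / 2) : ℝ) *
        (√D * ((D * n).divisors.card : ℝ) + ((D ^ 2 * n).divisors.card : ℝ)) *
        |besselJ ν (4 * π / (D * n))|
      = (√D * √n)⁻¹ * (√D * ((D * n).divisors.card : ℝ) + ((D ^ 2 * n).divisors.card : ℝ)) *
          |besselJ ν (4 * π / (D * n))| := by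
        rw [rpow_neg (by positivity), ← sqrt_eq_rpow, sqrt_mul (by positivity)]
    _ ≤ (√D * √n)⁻¹ * (3 * √D * n) * ((4 * π / (D * n) / 2) ^ 4 / 24) := by gcongr
    _ = 2 * π ^ 4 / D ^ 4 * (√n / n ^ 4) := by
        field_simp
        rw [sq_sqrt (by positivity)]
        ring
    _ ≤ 2 * π ^ 4 / D ^ 4 * (1 / n ^ 2) := by
        refine mul_le_mul_of_nonneg_left ?_ (by positivity)
        rw [div_le_div_iff₀ (by positivity) (by positivity)]
        nlinarith [pow_le_pow_right₀ hn1 (show 3 ≤ 4 by norm_num)]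

lemma hasSum_one_div_pnat_sq : HasSum (fun m : ℕ+ => 1 / ((m : ℕ) : ℝ) ^ 2) (π ^ 2 / 6) := by
  refine hasSum_pnat_iff (f := fun n : ℕ => 1 / (n : ℝ) ^ 2).2 ?_
  simpa using hasSum_zeta_two

lemma Psi2_le {k D : ℕ} (hk : 5 ≤ k) (hD : D.Prime) (hD9 : 9 ≤ D) :
    Psi2 k D ≤ 2 * π ^ 7 / (3 * D ^ 4) := by
  have hν : (4 : ℝ) ≤ k - 1 := by
    have : (5 : ℝ) ≤ k := by exact_mod_cast hk
    linarith
  have hbound := hasSum_one_div_pnat_sq.mul_left (2 * π ^ 4 / D ^ 4)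
  have hsummable : Summable (psi2Summand (k - 1) D) :=
    hbound.summable.of_nonneg_of_le (psi2Summand_nonneg _ D) (psi2Summand_le hν hD hD9)
  calc Psi2 k D = 2 * π * ∑' m, psi2Summand (k - 1) D m := Psi2_eq_tsum_psi2Summand k D
    _ ≤ 2 * π * (2 * π ^ 4 / D ^ 4 * (π ^ 2 / 6)) := by
        gcongr
        exact hasSum_le (psi2Summand_le hν hD hD9) hsummable.hasSum hbound
    _ = 2 * π ^ 7 / (3 * D ^ 4) := by
        field_simp
        ring

/-- For every integer `k ≥ 5` and prime `D ≥ 11`: `Ψ_k^2(D) < 0.25`. -/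
theorem Psi2_lt_of_5_le (k D : ℕ) (hk : 5 ≤ k) (hD : D.Prime) (hD11 : 11 ≤ D) :
    Psi2 k D < 0.25 := by
  have hD4 : (11 : ℝ) ^ 4 ≤ D ^ 4 := by gcongr; exact_mod_cast hD11
  have hπ7 : π ^ 7 < 3.15 ^ 7 := by gcongr; exact pi_lt_d2
  calc Psi2 k D ≤ 2 * π ^ 7 / (3 * D ^ 4) := Psi2_le hk hD (by omega)
    _ < 0.25 := by
        rw [div_lt_iff₀ (by positivity)]
        nlinarith
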